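/- arXiv:1909.03180 — 5 statements merged into one kernel-verified Lean document; each statement's English description precedes it below -/
import Mathlib

section
/- Let P ∈ F[x_1,...,x_n] be a polynomial, Q = (Q_1,...,Q_n) a tuple of polynomials in F[y_1,...,y_m], and a ∈ F^m. Then mult(P∘Q, a) ≥ mult(P, Q(a)). -/
open MvPolynomial

/-- The `i`-th Hasse derivative of a multivariate polynomial `P = Σ_m a_m x^m`. -/
noncomputable def hasseDeriv {F : Type*} [Field F] {σ : Type*} [Fintype σ] [DecidableEq σ]
    (i : σ →₀ ℕ) (P : MvPolynomial σ F) : MvPolynomial σ F :=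
  ∑ m ∈ P.support, (∏ k, Nat.choose (m k) (i k)) •
    MvPolynomial.monomial (m - i) (P.coeff m)

/-- `P` vanishes at `a` with multiplicity at least `N`: all Hasse derivatives of `P` of
weight strictly less than `N` vanish at `a`. -/
def HasMultAtLeast {F : Type*} [Field F] {σ : Type*} [Fintype σ] [DecidableEq σ]
    (P : MvPolynomial σ F) (a : σ → F) (N : ℕ) : Prop :=
  ∀ i : σ →₀ ℕ, (∑ k, i k) < N → MvPolynomial.eval a (hasseDeriv i P) = 0

/-- The multiplicity `mult(P,a)`: the largest `N` (possibly `∞`, when `P = 0`) such that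
all Hasse derivatives of `P` of weight less than `N` vanish at `a`. -/
noncomputable def mult {F : Type*} [Field F] {σ : Type*} [Fintype σ] [DecidableEq σ]
    (P : MvPolynomial σ F) (a : σ → F) : ℕ∞ :=
  ⨆ N ∈ {N : ℕ | HasMultAtLeast P a N}, (N : ℕ∞)

/-!
Hasse derivatives at `b` are the Taylor coefficients at `b`, so `P` has multiplicity at least
`N` at `b` iff the shifted polynomial `P(X + b)` lies in `(X_1, …, X_n)^N`. With `b = Q(a)`,
shifting `P ∘ Q` by `a` gives `P(X + b)` evaluated at `R_k = Q_k(Y + a) - b_k`; the `R_k` have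
no constant term, so this substitution maps `(X_1, …, X_n)^N` into `(Y_1, …, Y_m)^N`.
-/

namespace MvPolynomial

theorem coeff_prod_aeval_X {R : Type*} [CommSemiring R] {σ : Type*} [Fintype σ] [DecidableEq σ]
    (f : σ → Polynomial R) (i : σ →₀ ℕ) :
    coeff i (∏ k, Polynomial.aeval (X k) (f k)) = ∏ k, (f k).coeff (i k) := by
  have hexpand : ∀ k, Polynomial.aeval (X k : MvPolynomial σ R) (f k) =
      ∑ j ∈ (f k).support, monomial (Finsupp.single k j) ((f k).coeff j) := by
    intro k
    conv_lhs => rw [(f k).as_sum_support]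
    simp [X_pow_eq_monomial, C_mul_monomial]
  simp_rw [hexpand, Finset.prod_univ_sum, ← monomial_sum_prod, coeff_sum, coeff_monomial]
  have hsum : ∀ p : σ → ℕ, (∑ k, Finsupp.single k (p k) = i ↔ p = ⇑i) := by
    intro p
    rw [← Finsupp.equivFunOnFinite_symm_eq_sum, Equiv.symm_apply_eq]
    rfl
  simp_rw [hsum, Finset.sum_ite_eq']
  split_ifs with h
  · rfl
  · obtain ⟨k, hk⟩ : ∃ k, i k ∉ (f k).support := by simpa [Fintype.mem_piFinset] using h
    exact (Finset.prod_eq_zero (Finset.mem_univ k) (Polynomial.notMem_support_iff.mp hk)).symm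

theorem mem_idealOfVars_iff {R : Type*} [CommSemiring R] {σ : Type*} (p : MvPolynomial σ R) :
    p ∈ idealOfVars σ R ↔ constantCoeff p = 0 := by
  rw [← pow_one (idealOfVars σ R), mem_pow_idealOfVars_iff', constantCoeff_eq]
  refine ⟨fun h => h 0 (by simp), fun h x hx => ?_⟩
  obtain rfl : x = 0 := (Finsupp.degree_eq_zero_iff x).mp (Nat.lt_one_iff.mp hx)
  exact h

theorem aeval_mem_pow_idealOfVars {R : Type*} [CommSemiring R] {σ τ : Type*}
    {g : σ → MvPolynomial τ R} (hg : ∀ k, g k ∈ idealOfVars τ R) {N : ℕ}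
    {p : MvPolynomial σ R} (hp : p ∈ idealOfVars σ R ^ N) :
    aeval g p ∈ idealOfVars τ R ^ N := by
  have hmap : (idealOfVars σ R).map (aeval g) ≤ idealOfVars τ R := by
    rw [Ideal.map_span, Ideal.span_le]
    rintro _ ⟨_, ⟨k, rfl⟩, rfl⟩
    simpa using hg k
  have := Ideal.mem_map_of_mem (aeval g) hp
  rw [Ideal.map_pow] at this
  exact Ideal.pow_right_mono hmap N this

theorem constantCoeff_aeval_X_add_C {R : Type*} [CommSemiring R] {σ : Type*} (a : σ → R)
    (p : MvPolynomial σ R) :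
    constantCoeff (aeval (fun k => X k + C (a k)) p) = eval a p := by
  induction p using MvPolynomial.induction_on <;> simp_all

theorem aeval_eq_aeval_aeval_X_add_C {R : Type*} [CommRing R] {σ τ : Type*}
    (Q : σ → MvPolynomial τ R) (b : σ → R) (p : MvPolynomial σ R) :
    aeval Q p = aeval (fun k => Q k - C (b k)) (aeval (fun k => X k + C (b k)) p) := by
  rw [comp_aeval_apply]
  congr 2
  funext k
  simp [algebraMap_eq]

end MvPolynomial

section Multiplicity

variable {F : Type*} [Field F] {σ : Type*} [Fintype σ] [DecidableEq σ]

theorem eval_hasseDeriv (a : σ → F) (i : σ →₀ ℕ) (P : MvPolynomial σ F) :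
    eval a (hasseDeriv i P) = coeff i (aeval (fun k => X k + C (a k)) P) := by
  conv_rhs => rw [P.as_sum]
  rw [hasseDeriv, map_sum, map_sum, coeff_sum]
  refine Finset.sum_congr rfl fun m _ => ?_
  have hshift : ∀ k, (X k + C (a k) : MvPolynomial σ F) ^ m k =
      Polynomial.aeval (X k) ((Polynomial.X + Polynomial.C (a k)) ^ m k) := by
    simp
  rw [aeval_monomial, Finsupp.prod_fintype _ _ fun _ => pow_zero _, algebraMap_eq, coeff_C_mul]
  simp_rw [hshift]
  rw [coeff_prod_aeval_X, nsmul_eq_mul, map_mul, map_natCast, eval_monomial,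
    Finsupp.prod_fintype _ _ fun _ => pow_zero _]
  simp only [Polynomial.coeff_X_add_C_pow, Finsupp.tsub_apply, Finset.prod_mul_distrib,
    Nat.cast_prod]
  ring

theorem hasMultAtLeast_iff_mem_pow_idealOfVars (P : MvPolynomial σ F) (b : σ → F) (N : ℕ) :
    HasMultAtLeast P b N ↔ aeval (fun k => X k + C (b k)) P ∈ idealOfVars σ F ^ N := by
  simp only [HasMultAtLeast, mem_pow_idealOfVars_iff', Finsupp.degree_eq_sum, eval_hasseDeriv]

theorem HasMultAtLeast.aeval {τ : Type*} [Fintype τ] [DecidableEq τ] {P : MvPolynomial σ F}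
    {Q : σ → MvPolynomial τ F} {a : τ → F} {N : ℕ}
    (h : HasMultAtLeast P (fun k => eval a (Q k)) N) : HasMultAtLeast (aeval Q P) a N := by
  rw [hasMultAtLeast_iff_mem_pow_idealOfVars] at h ⊢
  rw [comp_aeval_apply, aeval_eq_aeval_aeval_X_add_C _ (fun k => eval a (Q k))]
  refine aeval_mem_pow_idealOfVars (fun k => ?_) h
  rw [mem_idealOfVars_iff, map_sub, constantCoeff_aeval_X_add_C, constantCoeff_C, sub_self]

end Multiplicity

/-- Multiplicities under composition: for `P ∈ F[x_1,…,x_n]`, a tuple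
`Q = (Q_1,…,Q_n)` of polynomials in `F[y_1,…,y_m]`, and `a ∈ F^m`,
`mult(P∘Q, a) ≥ mult(P, Q(a))`. -/
theorem mult_comp {F : Type*} [Field F] {n m : ℕ}
    (P : MvPolynomial (Fin n) F) (Q : Fin n → MvPolynomial (Fin m) F) (a : Fin m → F) :
    mult P (fun k => MvPolynomial.eval a (Q k)) ≤ mult (MvPolynomial.aeval Q P) a :=
  biSup_mono fun _ => HasMultAtLeast.aeval
end

section
/- Given a nonnegative integer d and nonnegative integers N_x indexed by x ∈ F_q^n satisfying Σ_{x ∈ F_q^n} binom(N_x + n − 1, n) < binom(d + n, n), there exists a nonzero polynomial P of total degree at most d that vanishes at each x ∈ F_q^n with multiplicity at least N_x. -/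
/-!
The conditions `P` has to satisfy are linear in its coefficients: at `x` there is one condition
`eval x (hasseDeriv i P) = 0` for each exponent `i` of weight `< N x`, and by stars and bars there
are `C(N x + n - 1, n)` of these. The polynomials of total degree `≤ d` form a space of dimension
`C(d + n, n)`, so when there are fewer conditions than that, the map sending `P` to the values of
all its conditions has a nonzero kernel.
-/

open MvPolynomial

open Finset

section Counting

variable (σ : Type*) [Fintype σ] [DecidableEq σ]

noncomputable def exponentsDegreeLT (N : ℕ) : Finset (σ →₀ ℕ) :=
  (range N).biUnion (univ.finsuppAntidiag ·)

variable {σ}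

theorem mem_exponentsDegreeLT {N : ℕ} {m : σ →₀ ℕ} :
    m ∈ exponentsDegreeLT σ N ↔ ∑ k, m k < N := by
  simp [exponentsDegreeLT]

theorem card_exponentsDegreeLT_succ (d : ℕ) :
    #(exponentsDegreeLT σ (d + 1)) = (d + Fintype.card σ).choose (Fintype.card σ) := by
  rw [exponentsDegreeLT, card_biUnion]
  · simp_rw [card_finsuppAntidiag_nat_eq_multichoose, card_univ, Nat.sum_range_multichoose]
  · intro j _ j' _ hjj'
    refine disjoint_left.mpr fun m hm hm' => hjj' ?_
    simp only [mem_finsuppAntidiag, subset_univ, and_true] at hm hm'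
    exact hm.symm.trans hm'

-- Not an equality: for `N = 0` and empty `σ` the truncated `0 + 0 - 1` gives `choose 0 0 = 1`.
theorem card_exponentsDegreeLT_le (N : ℕ) :
    #(exponentsDegreeLT σ N) ≤ (N + Fintype.card σ - 1).choose (Fintype.card σ) := by
  cases N with
  | zero => simp [exponentsDegreeLT]
  | succ d => rw [card_exponentsDegreeLT_succ, Nat.add_right_comm, Nat.add_sub_cancel]

end Counting

namespace MvPolynomial

variable {σ R : Type*} [Fintype σ] [DecidableEq σ] [CommRing R] [Nontrivial R]

theorem finrank_restrictTotalDegree (d : ℕ) :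
    Module.finrank R (restrictTotalDegree σ R d) =
      (d + Fintype.card σ).choose (Fintype.card σ) := by
  have hexp :
      {m : σ →₀ ℕ | (m.sum fun _ e => e) ≤ d} = ↑(exponentsDegreeLT σ (d + 1)) := by
    ext m
    simp [mem_exponentsDegreeLT, Finsupp.sum_fintype]
  rw [restrictTotalDegree, Module.finrank_eq_nat_card_basis (basisRestrictSupport R _), hexp]
  exact (Nat.card_eq_finsetCard _).trans (card_exponentsDegreeLT_succ d)

end MvPolynomial

section HasseDeriv

variable {F σ : Type*} [Field F] [Fintype σ] [DecidableEq σ]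

theorem hasseDeriv_eq_sum_of_support_subset (i : σ →₀ ℕ) {P : MvPolynomial σ F}
    {s : Finset (σ →₀ ℕ)} (hs : P.support ⊆ s) :
    hasseDeriv i P = ∑ m ∈ s, (∏ k, (m k).choose (i k)) • monomial (m - i) (P.coeff m) :=
  sum_subset hs fun m _ hm => by rw [notMem_support_iff.mp hm, map_zero, smul_zero]

theorem hasseDeriv_add (i : σ →₀ ℕ) (P Q : MvPolynomial σ F) :
    hasseDeriv i (P + Q) = hasseDeriv i P + hasseDeriv i Q := by
  rw [hasseDeriv_eq_sum_of_support_subset i support_add,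
    hasseDeriv_eq_sum_of_support_subset i (subset_union_left (s₂ := Q.support)),
    hasseDeriv_eq_sum_of_support_subset i (subset_union_right (s₁ := P.support)),
    ← sum_add_distrib]
  simp only [coeff_add, map_add, smul_add]

theorem hasseDeriv_smul (i : σ →₀ ℕ) (c : F) (P : MvPolynomial σ F) :
    hasseDeriv i (c • P) = c • hasseDeriv i P := by
  rw [hasseDeriv_eq_sum_of_support_subset i (support_smul : (c • P).support ⊆ P.support),
    hasseDeriv, smul_sum]
  simp only [coeff_smul, map_smul, smul_comm c]

noncomputable def hasseDerivLinearMap (i : σ →₀ ℕ) :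
    MvPolynomial σ F →ₗ[F] MvPolynomial σ F where
  toFun := hasseDeriv i
  map_add' := hasseDeriv_add i
  map_smul' := hasseDeriv_smul i

theorem exists_ne_zero_hasMultAtLeast_of_card_lt (d : ℕ) (S : Finset (σ → F))
    (N : (σ → F) → ℕ)
    (h : ∑ x ∈ S, #(exponentsDegreeLT σ (N x)) <
      (d + Fintype.card σ).choose (Fintype.card σ)) :
    ∃ P : MvPolynomial σ F, P ≠ 0 ∧ P.totalDegree ≤ d ∧
      ∀ x ∈ S, HasMultAtLeast P x (N x) := by
  let conditions := S.sigma fun x => exponentsDegreeLT σ (N x)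
  let Φ : restrictTotalDegree σ F d →ₗ[F] (conditions → F) :=
    LinearMap.pi (fun c => (aeval c.1.1).toLinearMap ∘ₗ hasseDerivLinearMap c.1.2) ∘ₗ
      (restrictTotalDegree σ F d).subtype
  have hdim :
      Module.finrank F (conditions → F) < Module.finrank F (restrictTotalDegree σ F d) := by
    rwa [Module.finrank_fintype_fun_eq_card, Fintype.card_coe, card_sigma,
      finrank_restrictTotalDegree]
  obtain ⟨⟨P, hPd⟩, hPΦ, hP0⟩ :=
    (Submodule.ne_bot_iff _).mp (LinearMap.ker_ne_bot_of_finrank_lt hdim)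
  refine ⟨P, by simpa using hP0, (mem_restrictTotalDegree σ d P).mp hPd, fun x hx i hi => ?_⟩
  have hcond : ⟨x, i⟩ ∈ conditions := mem_sigma.mpr ⟨hx, mem_exponentsDegreeLT.mpr hi⟩
  have hvanish : Φ ⟨P, hPd⟩ ⟨⟨x, i⟩, hcond⟩ = 0 := by
    rw [LinearMap.mem_ker.mp hPΦ, Pi.zero_apply]
  simpa [Φ, hasseDerivLinearMap] using hvanish

end HasseDeriv

/-- Given `d` and prescribed multiplicities `N_x` for `x ∈ F_q^n` with
`Σ_x C(N_x + n − 1, n) < C(d + n, n)`, there is a nonzero polynomial of total degree at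
most `d` vanishing at each `x` with multiplicity at least `N_x`. -/
theorem exists_poly_vanish_mult {F : Type*} [Field F] [Fintype F] {n : ℕ}
    (d : ℕ) (N : (Fin n → F) → ℕ)
    (h : ∑ x : Fin n → F, Nat.choose (N x + n - 1) n < Nat.choose (d + n) n) :
    ∃ P : MvPolynomial (Fin n) F, P ≠ 0 ∧ P.totalDegree ≤ d ∧
      ∀ x : Fin n → F, HasMultAtLeast P x (N x) := by
  have hcount : ∑ x, #(exponentsDegreeLT (Fin n) (N x)) < (d + n).choose n :=
    (sum_le_sum fun x _ => (card_exponentsDegreeLT_le (N x)).trans_eq (by simp)).trans_lt h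
  obtain ⟨P, hP0, hPd, hP⟩ :=
    exists_ne_zero_hasMultAtLeast_of_card_lt d univ N (by simpa using hcount)
  exact ⟨P, hP0, hPd, fun x => hP x (mem_univ x)⟩
end

section
/- If for all sets S ⊆ F_q^n of size q^{δn} (δ ∈ [0,1]) there exists a surjective linear map φ: F_q^n → F_q^{n−k} with H_∞^q(φ(U_S)) ≥ δ(n−k) − D for some constant D ≥ 0, then every (k,m)-Furstenberg set S ⊆ F_q^n satisfies |S| ≥ q^{−(n/k)·D} · m^{n/k}. -/
/-!
Put `δ = log_q |S| / n`, so that `|S| = q^{δn}`, and let `φ` be the map given by the entropic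
hypothesis. Its kernel is `k`-dimensional, so some translate of it, i.e. some fibre of `φ`, contains
`m` points of `S`; hence `φ(U_S)` has an atom of mass `≥ m / |S|` and
`δ(n - k) - D ≤ H_∞^q(φ(U_S)) ≤ δn - log_q m`. Thus `log_q m - D ≤ δk`, which exponentiates to
`q^{-(n/k)D} m^{n/k} ≤ q^{δn} = |S|`.
-/

/-- The `q`-ary min-entropy of a random variable (probability mass function) `p`:
`H_∞^q(p) = −log_q (max_w Pr[p = w])`. -/
noncomputable def minEntropy {α : Type*} (q : ℕ) (p : PMF α) : ℝ :=
  - Real.logb q (⨆ w : α, (p w).toReal)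

open Module Finset

theorem finrank_ker_add_finrank_of_surjective {K V W : Type*} [DivisionRing K] [AddCommGroup V]
    [Module K V] [FiniteDimensional K V] [AddCommGroup W] [Module K W] {f : V →ₗ[K] W}
    (hf : Function.Surjective f) : finrank K (LinearMap.ker f) + finrank K W = finrank K V := by
  rw [← LinearMap.finrank_range_add_finrank_ker f, LinearMap.range_eq_top.2 hf, finrank_top,
    add_comm]

theorem exists_submodule_finrank_eq {K V : Type*} [DivisionRing K] [AddCommGroup V] [Module K V]
    [FiniteDimensional K V] {k : ℕ} (hk : k ≤ finrank K V) :
    ∃ W : Submodule K V, finrank K W = k := by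
  obtain ⟨b, hb⟩ := exists_linearIndependent_of_le_finrank hk
  exact ⟨Submodule.span K (Set.range b), by rw [finrank_span_eq_card hb, Fintype.card_fin]⟩

open Classical in
theorem PMF.map_uniformOfFinset_apply {α β : Type*} {s : Finset α} (hs : s.Nonempty)
    (f : α → β) (b : β) :
    (uniformOfFinset s hs).map f b = #{x ∈ s | f x = b} / #s := by
  rw [← toOuterMeasure_apply_singleton, toOuterMeasure_map_apply,
    toOuterMeasure_uniformOfFinset_apply]
  rfl

theorem minEntropy_le_neg_logb_apply {α : Type*} {q : ℕ} (hq : 1 < q) (p : PMF α) {a : α}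
    (ha : p a ≠ 0) : minEntropy q p ≤ -Real.logb q (p a).toReal := by
  have hbdd : BddAbove (Set.range fun w => (p w).toReal) :=
    ⟨1, Set.forall_mem_range.2 fun w => ENNReal.toReal_le_of_le_ofReal zero_le_one
      (by simpa using p.coe_le_one w)⟩
  have hpos : 0 < (p a).toReal := ENNReal.toReal_pos ha (p.apply_ne_top a)
  exact neg_le_neg (Real.logb_le_logb_of_le (by exact_mod_cast hq) hpos (le_ciSup hbdd a))

open Classical in
theorem minEntropy_map_uniformOfFinset_le {α β : Type*} {q : ℕ} (hq : 1 < q) {s : Finset α}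
    (hs : s.Nonempty) (f : α → β) {m : ℕ} (hm : 0 < m) {a : α}
    (hfib : m ≤ #{x ∈ s | f x = f a}) :
    minEntropy q ((PMF.uniformOfFinset s hs).map f) ≤ Real.logb q #s - Real.logb q m := by
  have hmass : ((PMF.uniformOfFinset s hs).map f (f a)).toReal = #{x ∈ s | f x = f a} / #s := by
    rw [PMF.map_uniformOfFinset_apply, ENNReal.toReal_div]
    simp only [ENNReal.toReal_natCast]
  have hne : (PMF.uniformOfFinset s hs).map f (f a) ≠ 0 := by
    rw [PMF.map_uniformOfFinset_apply]
    simpa [Finset.Nonempty, hs.ne_empty] using hm.trans_le hfib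
  have hs0 : (0 : ℝ) < #s := by exact_mod_cast hs.card_pos
  have hm0 : (0 : ℝ) < m := by exact_mod_cast hm
  calc minEntropy q _ ≤ -Real.logb q (m / #s) := by
        refine (minEntropy_le_neg_logb_apply hq _ hne).trans (neg_le_neg ?_)
        rw [hmass]
        exact Real.logb_le_logb_of_le (by exact_mod_cast hq) (by positivity) (by gcongr)
    _ = Real.logb q #s - Real.logb q m := by
        rw [Real.logb_div hm0.ne' hs0.ne']
        ring

section Furstenberg

variable {F V : Type*} [Field F] [AddCommGroup V] [Module F V]

variable (F) in
open Classical in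
def IsFurstenberg (k m : ℕ) (S : Finset V) : Prop :=
  ∀ W : Submodule F V, finrank F W = k → ∃ v : V, m ≤ #{x ∈ S | x - v ∈ W}

variable {k m : ℕ} {S : Finset V}

theorem IsFurstenberg.nonempty [FiniteDimensional F V] (hS : IsFurstenberg F k m S) (hm : 1 ≤ m)
    (hk : k ≤ finrank F V) : S.Nonempty := by
  obtain ⟨W, hW⟩ := exists_submodule_finrank_eq hk
  obtain ⟨v, hv⟩ := hS W hW
  exact nonempty_of_ne_empty fun h => by simp [h] at hv; omega

theorem IsFurstenberg.minEntropy_map_le {W : Type*} [AddCommGroup W] [Module F W]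
    (hS : IsFurstenberg F k m S) (hm : 1 ≤ m) {q : ℕ} (hq : 1 < q) (hSne : S.Nonempty)
    (φ : V →ₗ[F] W) (hφ : finrank F (LinearMap.ker φ) = k) :
    minEntropy q ((PMF.uniformOfFinset S hSne).map φ) ≤ Real.logb q #S - Real.logb q m := by
  classical
  obtain ⟨v, hv⟩ := hS _ hφ
  refine minEntropy_map_uniformOfFinset_le (a := v) hq hSne φ hm ?_
  simpa only [LinearMap.sub_mem_ker_iff] using hv

end Furstenberg

theorem exists_eq_rpow_mul_of_one_le_of_le_pow {q x : ℝ} {n : ℕ} (hq : 1 < q) (hn : 0 < n)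
    (hx : 1 ≤ x) (hxq : x ≤ q ^ n) : ∃ δ : ℝ, 0 ≤ δ ∧ δ ≤ 1 ∧ x = q ^ (δ * n) := by
  have hn' : (0 : ℝ) < n := by exact_mod_cast hn
  refine ⟨Real.logb q x / n, div_nonneg (Real.logb_nonneg hq hx) hn'.le, ?_, ?_⟩
  · rw [div_le_one hn', Real.logb_le_iff_le_rpow hq (by linarith), Real.rpow_natCast]
    exact hxq
  · rw [div_mul_cancel₀ _ hn'.ne', Real.rpow_logb (by linarith) hq.ne' (by linarith)]

theorem rpow_neg_mul_mul_rpow_le_rpow_mul {q m n k δ D : ℝ} (hq : 1 < q) (hm : 0 < m)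
    (hn : 0 ≤ n) (hk : 0 < k) (h : Real.logb q m - D ≤ δ * k) :
    q ^ (-(n / k) * D) * m ^ (n / k) ≤ q ^ (δ * n) := by
  have hq0 : 0 < q := by linarith
  calc q ^ (-(n / k) * D) * m ^ (n / k) = q ^ (n / k * (Real.logb q m - D)) := by
        conv_lhs =>
          rw [← Real.rpow_logb hq0 hq.ne' hm, ← Real.rpow_mul hq0.le, ← Real.rpow_add hq0]
        ring_nf
    _ ≤ q ^ (n / k * (δ * k)) := by gcongr; exact hq.le
    _ = q ^ (δ * n) := by field_simp

open Classical in
theorem entropic_to_furstenberg_general {F : Type*} [Field F] [Fintype F] (q n k : ℕ)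
    (hq : Fintype.card F = q) (hk : 1 ≤ k) (hkn : k < n) (D : ℝ)
    (hEnt : ∀ δ : ℝ, 0 ≤ δ → δ ≤ 1 →
      ∀ (S : Finset (Fin n → F)) (hS : S.Nonempty), (S.card : ℝ) = (q : ℝ) ^ (δ * n) →
        ∃ φ : (Fin n → F) →ₗ[F] (Fin (n - k) → F), Function.Surjective φ ∧
          δ * ((n : ℝ) - k) - D ≤ minEntropy q ((PMF.uniformOfFinset S hS).map φ)) :
    ∀ m : ℕ, 1 ≤ m → m ≤ q ^ k → ∀ S : Finset (Fin n → F),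
      (∀ W : Submodule F (Fin n → F), Module.finrank F W = k →
        ∃ v : Fin n → F, m ≤ (S.filter (fun x => x - v ∈ W)).card) →
      (q : ℝ) ^ (-((n : ℝ) / k) * D) * (m : ℝ) ^ ((n : ℝ) / k) ≤ S.card := by
  intro m hm _ S hFur
  replace hFur : IsFurstenberg F k m S := hFur
  have hq1 : 1 < q := hq ▸ Fintype.one_lt_card
  have hS := hFur.nonempty hm (by rw [finrank_fin_fun]; omega)
  have hSq : (#S : ℝ) ≤ (q : ℝ) ^ n := by
    exact_mod_cast (card_le_univ S).trans_eq (by simp [hq])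
  obtain ⟨δ, hδ0, hδ1, hcard⟩ := exists_eq_rpow_mul_of_one_le_of_le_pow (by exact_mod_cast hq1)
    (by omega) (by exact_mod_cast hS.card_pos) hSq
  obtain ⟨φ, hφ, hent⟩ := hEnt δ hδ0 hδ1 S hS hcard
  have hker : finrank F (LinearMap.ker φ) = k := by
    have := finrank_ker_add_finrank_of_surjective hφ
    simp only [finrank_fin_fun] at this
    omega
  have hmin := hFur.minEntropy_map_le hm hq1 hS φ hker
  rw [hcard, Real.logb_rpow (by positivity) (by exact_mod_cast hq1.ne')] at hmin
  rw [hcard]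
  refine rpow_neg_mul_mul_rpow_le_rpow_mul (by exact_mod_cast hq1) (by positivity)
    (by positivity) (by positivity) ?_
  linarith

open Classical in
/-- From the entropic statement to the Furstenberg set bound: if for every set `S ⊆ F_q^n`
of size `q^{δn}` (`δ ∈ [0,1]`) there is a surjective linear map `φ : F_q^n → F_q^{n−k}`
with `H_∞^q(φ(U_S)) ≥ δ(n−k) − D` (`D ≥ 0`), then every `(k,m)`-Furstenberg set `S`
satisfies `|S| ≥ q^{−(n/k)·D} · m^{n/k}`. -/
theorem entropic_to_furstenberg {F : Type*} [Field F] [Fintype F] (q n k : ℕ)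
    (hq : Fintype.card F = q) (hk : 1 ≤ k) (hkn : k < n) (D : ℝ) (hD : 0 ≤ D)
    (hEnt : ∀ δ : ℝ, 0 ≤ δ → δ ≤ 1 →
      ∀ (S : Finset (Fin n → F)) (hS : S.Nonempty), (S.card : ℝ) = (q : ℝ) ^ (δ * n) →
        ∃ φ : (Fin n → F) →ₗ[F] (Fin (n - k) → F), Function.Surjective φ ∧
          δ * ((n : ℝ) - k) - D ≤ minEntropy q ((PMF.uniformOfFinset S hS).map φ)) :
    ∀ m : ℕ, 1 ≤ m → m ≤ q ^ k → ∀ S : Finset (Fin n → F),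
      (∀ W : Submodule F (Fin n → F), Module.finrank F W = k →
        ∃ v : Fin n → F, m ≤ (S.filter (fun x => x - v ∈ W)).card) →
      (q : ℝ) ^ (-((n : ℝ) / k) * D) * (m : ℝ) ^ ((n : ℝ) / k) ≤ S.card :=
  entropic_to_furstenberg_general q n k hq hk hkn D hEnt
end

section
/- If every (k,m)-Furstenberg set S ⊆ F_q^n satisfies |S| ≥ C · m^{n/k} for a constant 0 < C ≤ 1 (for all m ≤ q^k), then for any δ ∈ [0,1] and any set S ⊆ F_q^n of size q^{δn}, there is a surjective linear map φ: F_q^n → F_q^{n−k} with H_∞^q(φ(U_S)) ≥ δ(n−k) − (k/n)·log_q(1/C). -/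
open Finset ENNReal

/-- The mass of a point under the pushforward of the uniform distribution on `S`. -/
lemma map_uniformOfFinset_apply_toReal {α β : Type*} [Fintype α]
    (S : Finset α) (hS : S.Nonempty) (f : α → β) (w : β)
    [DecidablePred (fun x => f x = w)] :
    ((((PMF.uniformOfFinset S hS).map f) w)).toReal
      = ((S.filter (fun x => f x = w)).card : ℝ) / S.card := by
  have h1 : (((PMF.uniformOfFinset S hS).map f) w)
      = ((S.filter (fun x => f x = w)).card : ℝ≥0∞) * ((S.card : ℝ≥0∞))⁻¹ := by
    rw [PMF.map_apply, tsum_fintype]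
    trans (∑ _a ∈ S.filter (fun x => f x = w), ((S.card : ℝ≥0∞))⁻¹)
    · rw [Finset.sum_filter,
        ← Finset.sum_subset (Finset.subset_univ S) (by intro x _ hx; simp [hx])]
      refine Finset.sum_congr rfl fun a ha => ?_
      by_cases h : f a = w
      · simp [h, ha]
      · rw [if_neg h, if_neg (fun hw => h hw.symm)]
    · rw [Finset.sum_const, nsmul_eq_mul]
  rw [h1, ENNReal.toReal_mul, ENNReal.toReal_inv, ENNReal.toReal_natCast,
    ENNReal.toReal_natCast, div_eq_mul_inv]

/-- Every `k`-dimensional subspace of `F^n` is the kernel of some surjective linear map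
onto `F^{n-k}`. -/
lemma exists_surj_ker {F : Type*} [Field F] {n k : ℕ} (hkn : k < n)
    (W : Submodule F (Fin n → F)) (hW : Module.finrank F W = k) :
    ∃ φ : (Fin n → F) →ₗ[F] (Fin (n - k) → F),
      Function.Surjective φ ∧ LinearMap.ker φ = W := by
  have h1 : Module.finrank F ((Fin n → F) ⧸ W) = n - k := by
    have h2 := W.finrank_quotient_add_finrank
    rw [hW, Module.finrank_fin_fun] at h2
    omega
  obtain ⟨e⟩ := FiniteDimensional.nonempty_linearEquiv_of_finrank_eq
    (R := F) (M := (Fin n → F) ⧸ W) (M' := Fin (n - k) → F)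
    (by rw [h1, Module.finrank_fin_fun])
  refine ⟨e.toLinearMap ∘ₗ W.mkQ, e.surjective.comp (Submodule.mkQ_surjective W), ?_⟩
  rw [LinearMap.ker_comp]
  have : LinearMap.ker e.toLinearMap = ⊥ := LinearMap.ker_eq_bot.mpr e.injective
  rw [this, Submodule.comap_bot, Submodule.ker_mkQ]

open Classical in
/-- From the Furstenberg set bound to the entropic statement: if every `(k,m)`-Furstenberg
set `S ⊆ F_q^n` satisfies `|S| ≥ C·m^{n/k}` (`0 < C ≤ 1`, for all `m ≤ q^k`), then for any
`δ ∈ [0,1]` and any set `S` of size `q^{δn}` there is a surjective linear map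
`φ : F_q^n → F_q^{n−k}` with `H_∞^q(φ(U_S)) ≥ δ(n−k) − (k/n)·log_q(1/C)`. -/
theorem furstenberg_to_entropic {F : Type*} [Field F] [Fintype F] (q n k : ℕ)
    (hq : Fintype.card F = q) (hk : 1 ≤ k) (hkn : k < n) (C : ℝ) (hC0 : 0 < C) (hC1 : C ≤ 1)
    (hFurst : ∀ m : ℕ, 1 ≤ m → m ≤ q ^ k → ∀ S : Finset (Fin n → F),
      (∀ W : Submodule F (Fin n → F), Module.finrank F W = k →
        ∃ v : Fin n → F, m ≤ (S.filter (fun x => x - v ∈ W)).card) →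
      C * (m : ℝ) ^ ((n : ℝ) / k) ≤ S.card) :
    ∀ δ : ℝ, 0 ≤ δ → δ ≤ 1 →
      ∀ (S : Finset (Fin n → F)) (hS : S.Nonempty), (S.card : ℝ) = (q : ℝ) ^ (δ * n) →
        ∃ φ : (Fin n → F) →ₗ[F] (Fin (n - k) → F), Function.Surjective φ ∧
          δ * ((n : ℝ) - k) - ((k : ℝ) / n) * Real.logb q (1 / C) ≤
            minEntropy q ((PMF.uniformOfFinset S hS).map φ) := by
  intro δ hδ0 hδ1 S hS hScard
  by_contra hcon
  push_neg at hcon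
  -- basic facts about q, n, k
  have hqnat : 1 < q := hq ▸ Fintype.one_lt_card
  have hq1 : (1 : ℝ) < (q : ℝ) := by exact_mod_cast hqnat
  have hq0 : (0 : ℝ) < (q : ℝ) := lt_trans one_pos hq1
  have hn0 : (0 : ℝ) < (n : ℝ) := by exact_mod_cast lt_of_le_of_lt (Nat.zero_le k) hkn
  have hk0 : (0 : ℝ) < (k : ℝ) := by exact_mod_cast hk
  have hScard0 : (0 : ℝ) < (S.card : ℝ) := by exact_mod_cast Finset.card_pos.mpr hS
  -- the entropy bound and the probability threshold
  set B : ℝ := δ * ((n : ℝ) - k) - ((k : ℝ) / n) * Real.logb q (1 / C) with hB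
  set t : ℝ := (q : ℝ) ^ (-B) with ht
  have ht0 : 0 < t := Real.rpow_pos_of_pos hq0 _
  -- key: for every k-dimensional subspace, some coset contains more than t * |S| points of S
  have key : ∀ W : Submodule F (Fin n → F), Module.finrank F W = k →
      ∃ v : Fin n → F,
        t * S.card < ((S.filter (fun x => x - v ∈ W)).card : ℝ) := by
    intro W hW
    obtain ⟨φ, hsurj, hker⟩ := exists_surj_ker hkn W hW
    set p : PMF (Fin (n - k) → F) := (PMF.uniformOfFinset S hS).map φ with hp
    have happ : ∀ w, (p w).toReal
        = ((S.filter (fun x => φ x = w)).card : ℝ) / S.card := fun w =>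
      map_uniformOfFinset_apply_toReal S hS φ w
    -- the supremum is attained
    obtain ⟨w₀, hw₀⟩ := exists_eq_ciSup_of_finite (f := fun w => (p w).toReal)
    -- the supremum is positive
    obtain ⟨x₀, hx₀⟩ := hS
    have hpos : 0 < (p w₀).toReal := by
      rw [hw₀]
      refine lt_of_lt_of_le ?_ (le_ciSup (Set.finite_range _).bddAbove (φ x₀))
      rw [happ]
      apply div_pos _ hScard0
      have : 0 < (S.filter (fun x => φ x = φ x₀)).card :=
        Finset.card_pos.mpr ⟨x₀, Finset.mem_filter.mpr ⟨hx₀, rfl⟩⟩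
      exact_mod_cast this
    -- from the entropy failure, the max mass exceeds t
    have hlt : minEntropy q p < B := hcon φ hsurj
    have hmass : t < (p w₀).toReal := by
      have h1 : -B < Real.logb q (⨆ w, (p w).toReal) := by
        unfold minEntropy at hlt; linarith
      rw [← hw₀] at h1
      exact (Real.lt_logb_iff_rpow_lt hq1 hpos).mp h1
    -- translate to a coset count
    obtain ⟨v, hv⟩ := hsurj w₀
    refine ⟨v, ?_⟩
    have hfilter : S.filter (fun x => x - v ∈ W) = S.filter (fun x => φ x = w₀) := by
      apply Finset.filter_congr
      intro x _
      simp only [← hker, LinearMap.mem_ker, map_sub, hv, sub_eq_zero]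
    rw [hfilter]
    have := hmass
    rw [happ, lt_div_iff₀ hScard0] at this
    linarith [this]
  -- t * |S| = q^{δk} * (1/C)^{k/n}
  have htS : t * S.card = (q : ℝ) ^ (δ * k) * (1 / C) ^ ((k : ℝ) / n) := by
    rw [hScard, ht, ← Real.rpow_add hq0]
    have hlogb : (q : ℝ) ^ (((k : ℝ) / n) * Real.logb q (1 / C))
        = (1 / C) ^ ((k : ℝ) / n) := by
      rw [mul_comm, Real.rpow_mul (le_of_lt hq0),
        Real.rpow_logb hq0 (ne_of_gt hq1) (by positivity)]
    rw [← hlogb, ← Real.rpow_add hq0]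
    congr 1
    rw [hB]
    ring
  have htS0 : 0 ≤ t * S.card := le_of_lt (mul_pos ht0 hScard0)
  -- the candidate Furstenberg parameter
  set m : ℕ := ⌊t * S.card⌋₊ + 1 with hm
  have hmgt : t * S.card < (m : ℝ) := by
    rw [hm]; push_cast; exact Nat.lt_floor_add_one _
  -- fiber cardinality bound
  have fiber_le : ∀ (W : Submodule F (Fin n → F)) (v : Fin n → F),
      Module.finrank F W = k → (S.filter (fun x => x - v ∈ W)).card ≤ q ^ k := by
    intro W v hW
    have hinj : Set.InjOn (fun x => x - v) (S.filter (fun x => x - v ∈ W)) := by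
      intro x _ y _ hxy
      simpa using hxy
    have hmaps : ∀ x ∈ S.filter (fun x => x - v ∈ W),
        (fun x => x - v) x ∈ (W : Set (Fin n → F)).toFinset := by
      intro x hx
      rw [Set.mem_toFinset]
      exact (Finset.mem_filter.mp hx).2
    have h1 := Finset.card_le_card_of_injOn _ hmaps hinj
    rwa [Set.toFinset_card, show Fintype.card (W : Set (Fin n → F)) = Fintype.card W from rfl,
      Module.card_eq_pow_finrank (K := F) (V := W), hW, hq] at h1
  by_cases hcase : m ≤ q ^ k
  · -- apply the Furstenberg hypothesis
    have hFS : ∀ W : Submodule F (Fin n → F), Module.finrank F W = k →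
        ∃ v : Fin n → F, m ≤ (S.filter (fun x => x - v ∈ W)).card := by
      intro W hW
      obtain ⟨v, hv⟩ := key W hW
      refine ⟨v, ?_⟩
      rw [hm, Nat.add_one_le_iff, Nat.floor_lt htS0]
      exact hv
    have hle := hFurst m (Nat.le_add_left 1 _) hcase S hFS
    -- but m > t * |S| forces C * m^{n/k} > |S|
    have hpow : (t * S.card) ^ ((n : ℝ) / k) < (m : ℝ) ^ ((n : ℝ) / k) :=
      Real.rpow_lt_rpow htS0 hmgt (by positivity)
    have heval : (t * S.card) ^ ((n : ℝ) / k) = S.card / C := by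
      rw [htS, Real.mul_rpow (by positivity) (by positivity),
        ← Real.rpow_mul (le_of_lt hq0), ← Real.rpow_mul (by positivity : (0:ℝ) ≤ 1 / C)]
      have e1 : δ * (k : ℝ) * ((n : ℝ) / k) = δ * n := by field_simp
      have e2 : ((k : ℝ) / n) * ((n : ℝ) / k) = 1 := by field_simp
      rw [e1, e2, Real.rpow_one, ← hScard]
      ring
    rw [heval] at hpow
    have hfin : (S.card : ℝ) < C * (m : ℝ) ^ ((n : ℝ) / k) := by
      have h3 := (mul_lt_mul_iff_right₀ hC0).mpr hpow
      rwa [mul_comm C ((S.card : ℝ) / C), div_mul_cancel₀ _ (ne_of_gt hC0)] at h3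
    linarith
  · -- impossible: fibers have at most q^k points
    push_neg at hcase
    have hle2 : ((q : ℝ) ^ k : ℝ) ≤ t * S.card := by
      have : q ^ k ≤ ⌊t * S.card⌋₊ := by omega
      calc ((q : ℝ) ^ k : ℝ) ≤ (⌊t * S.card⌋₊ : ℝ) := by exact_mod_cast this
        _ ≤ t * S.card := Nat.floor_le htS0
    obtain ⟨b, hb⟩ := exists_linearIndependent_of_le_finrank
      (R := F) (M := Fin n → F) (n := k)
      (by rw [Module.finrank_fin_fun]; omega)
    set W₀ : Submodule F (Fin n → F) := Submodule.span F (Set.range b) with hW₀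
    have hW₀rank : Module.finrank F W₀ = k := by
      rw [hW₀, finrank_span_eq_card hb, Fintype.card_fin]
    obtain ⟨v, hv⟩ := key W₀ hW₀rank
    have h1 := fiber_le W₀ v hW₀rank
    have h2 : ((S.filter (fun x => x - v ∈ W₀)).card : ℝ) ≤ (q : ℝ) ^ k := by
      exact_mod_cast h1
    linarith
end

section
/- (Haemers incidence bound, consequence form) Let S be a set of points and L a set of k-flats in F_q^n, each flat of L containing at least δ·q^k points of S, with |L| = γ·q^{n−k}·C(n,k)_q and κ = γ·q^k. Then |S| ≥ (δκ/(κ+1) − √(δ(1−δ)/κ)) · q^n, assuming the incidence bound I(S,L) ≤ q^{k−n}|S||L| + √(q^k · C(n−1,k)_q · |S| · |L| · (1 − q^{−n}|S|)) and C(n,k)_q > q^k·C(n−1,k)_q. -/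
/-!
Every flat is `δ`-rich, so `I(S,L) ≥ δ q^k |L|`. Comparing with the assumed upper bound, squaring,
and using `q^k C(n-1,k)_q < C(n,k)_q` leaves, for the density `x = |S|/q^n < δ`, the quadratic
inequality `κ (δ - x)² ≤ x (1 - x)`. With `w = κδ - (κ+1)x` it reads `w² + w ≤ κδ(1-δ)`, so
`w ≤ √(κδ(1-δ))`, which is slightly stronger than the claimed lower bound on `x`.
-/

/-- The q-binomial coefficient `C(n,k)_q = ∏_{i=0}^{k-1} (q^{n-i} - 1)/(q^{k-i} - 1)`,
as a real number. -/
noncomputable def qBinom (q n k : ℕ) : ℝ :=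
  ∏ i ∈ Finset.range k, ((q : ℝ) ^ (n - i) - 1) / ((q : ℝ) ^ (k - i) - 1)

lemma qBinom_pos {q n k : ℕ} (hq : 1 < (q : ℝ)) (hkn : k ≤ n) : 0 < qBinom q n k :=
  Finset.prod_pos fun i hi => by
    have hi : i < k := Finset.mem_range.mp hi
    have hk : 1 < (q : ℝ) ^ (k - i) := one_lt_pow₀ hq (by omega)
    have hn : 1 < (q : ℝ) ^ (n - i) := one_lt_pow₀ hq (by omega)
    exact div_pos (by linarith) (by linarith)

lemma mul_sq_sub_le_of_mul_le_mul_add_sqrt {a c x δ : ℝ} (ha : 0 < a) (hc : 0 ≤ c)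
    (hxδ : x ≤ δ) (h : a * δ ≤ a * x + √(a * c)) : a * (δ - x) ^ 2 ≤ c := by
  have hsq : (a * (δ - x)) ^ 2 ≤ a * c :=
    (Real.le_sqrt (by nlinarith) (by positivity)).mp (by linarith)
  nlinarith

lemma sub_sqrt_le_of_mul_sq_sub_le {κ δ x : ℝ} (hκ : 0 < κ) (hδ0 : 0 ≤ δ) (hδ1 : δ ≤ 1)
    (h : x < δ → κ * (δ - x) ^ 2 ≤ x * (1 - x)) :
    δ * κ / (κ + 1) - √(δ * (1 - δ) / κ) ≤ x := by
  set y := δ * κ / (κ + 1) - x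
  rcases le_or_gt y 0 with hy | hy
  · linarith [Real.sqrt_nonneg (δ * (1 - δ) / κ)]
  have hw : y * (κ + 1) = κ * δ - (κ + 1) * x := by simp only [y]; field_simp
  have hxδ : x < δ := by nlinarith
  have hw2 : (y * (κ + 1)) ^ 2 ≤ κ * (δ * (1 - δ)) := by
    have hid : (κ + 1) * (κ * (δ - x) ^ 2 - x * (1 - x)) =
        (y * (κ + 1)) ^ 2 + y * (κ + 1) - κ * (δ * (1 - δ)) := by rw [hw]; ring
    nlinarith [h hxδ]
  have hy2 : y ^ 2 ≤ δ * (1 - δ) / κ := by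
    rw [le_div_iff₀ hκ]
    nlinarith [mul_nonneg hδ0 (sub_nonneg.mpr hδ1)]
  linarith [Real.le_sqrt_of_sq_le hy2]

open Classical in
theorem haemers_consequence_general {F : Type*} [Field F] [Fintype F] (q n k : ℕ)
    (hq : Fintype.card F = q) (hkn : k < n)
    (δ γ κ : ℝ) (hδ0 : 0 < δ) (hδ1 : δ ≤ 1) (hγ : 0 < γ)
    (S : Finset (Fin n → F)) (L : Finset (Set (Fin n → F)))
    (hrich : ∀ ℓ ∈ L, δ * (q : ℝ) ^ k ≤ ((S.filter (fun p => p ∈ ℓ)).card : ℝ))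
    (hL : (L.card : ℝ) = γ * (q : ℝ) ^ (n - k) * qBinom q n k)
    (hκ : κ = γ * (q : ℝ) ^ k)
    (hInc : (∑ ℓ ∈ L, ((S.filter (fun p => p ∈ ℓ)).card : ℝ)) ≤
      (S.card : ℝ) * L.card / (q : ℝ) ^ (n - k) +
        Real.sqrt ((q : ℝ) ^ k * qBinom q (n - 1) k * S.card * L.card *
          (1 - (S.card : ℝ) / (q : ℝ) ^ n)))
    (hqb : (q : ℝ) ^ k * qBinom q (n - 1) k < qBinom q n k) :
    (δ * κ / (κ + 1) - Real.sqrt (δ * (1 - δ) / κ)) * (q : ℝ) ^ n ≤ S.card := by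
  have hq1 : (1 : ℝ) < q := by exact_mod_cast hq ▸ Fintype.one_lt_card
  have hqn : (0 : ℝ) < (q : ℝ) ^ n := by positivity
  have hpow : (q : ℝ) ^ n = (q : ℝ) ^ (n - k) * (q : ℝ) ^ k := by
    rw [← pow_add, Nat.sub_add_cancel hkn.le]
  obtain ⟨x, hx0, hS⟩ : ∃ x : ℝ, 0 ≤ x ∧ (S.card : ℝ) = x * (q : ℝ) ^ n :=
    ⟨S.card / (q : ℝ) ^ n, by positivity, by field_simp⟩
  rw [hS, mul_div_cancel_right₀ _ hqn.ne'] at hInc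
  rw [hS]
  refine mul_le_mul_of_nonneg_right
    (sub_sqrt_le_of_mul_sq_sub_le (by rw [hκ]; positivity) hδ0.le hδ1 fun hxδ => ?_) hqn.le
  have hC : 0 < qBinom q n k := qBinom_pos hq1 hkn.le
  have hB : 0 < qBinom q (n - 1) k := qBinom_pos hq1 (by omega)
  have hx1 : 0 ≤ x * (1 - x) := mul_nonneg hx0 (by linarith)
  have hquad : (q : ℝ) ^ k * L.card * (δ - x) ^ 2 ≤
      qBinom q (n - 1) k * (q : ℝ) ^ n * (x * (1 - x)) := by
    refine mul_sq_sub_le_of_mul_le_mul_add_sqrt (by rw [hL]; positivity) (by positivity)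
      hxδ.le ?_
    calc (q : ℝ) ^ k * L.card * δ ≤ ∑ ℓ ∈ L, ((S.filter (fun p => p ∈ ℓ)).card : ℝ) := by
          have := Finset.card_nsmul_le_sum L _ _ hrich
          rw [nsmul_eq_mul] at this; linarith
      _ ≤ _ := hInc
      _ = _ := by rw [hpow]; field_simp
  refine le_of_mul_le_mul_left ?_ (mul_pos hC hqn)
  calc qBinom q n k * (q : ℝ) ^ n * (κ * (δ - x) ^ 2)
      = (q : ℝ) ^ k * ((q : ℝ) ^ k * L.card * (δ - x) ^ 2) := by
        rw [hκ, hL, hpow]; ring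
    _ ≤ (q : ℝ) ^ k * (qBinom q (n - 1) k * (q : ℝ) ^ n * (x * (1 - x))) := by gcongr
    _ = (q : ℝ) ^ k * qBinom q (n - 1) k * ((q : ℝ) ^ n * (x * (1 - x))) := by ring
    _ ≤ qBinom q n k * ((q : ℝ) ^ n * (x * (1 - x))) := by gcongr
    _ = qBinom q n k * (q : ℝ) ^ n * (x * (1 - x)) := by ring

open Classical in
/-- Haemers incidence bound, consequence form: if every flat of a set `L` of `k`-flats
contains at least `δ·q^k` points of `S`, `|L| = γ·q^{n−k}·C(n,k)_q`, `κ = γ·q^k`,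
and the incidence bound `I(S,L) ≤ q^{k−n}|S||L| + √(q^k·C(n−1,k)_q·|S|·|L|·(1−q^{−n}|S|))`
holds together with `C(n,k)_q > q^k·C(n−1,k)_q`, then
`|S| ≥ (δκ/(κ+1) − √(δ(1−δ)/κ))·q^n`. -/
theorem haemers_consequence {F : Type*} [Field F] [Fintype F] (q n k : ℕ)
    (hq : Fintype.card F = q) (hk : 1 ≤ k) (hkn : k < n)
    (δ γ κ : ℝ) (hδ0 : 0 < δ) (hδ1 : δ ≤ 1) (hγ : 0 < γ)
    (S : Finset (Fin n → F)) (L : Finset (Set (Fin n → F)))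
    (hflat : ∀ ℓ ∈ L, ∃ (W : Submodule F (Fin n → F)) (v : Fin n → F),
      Module.finrank F W = k ∧ ℓ = (fun x => v + x) '' (W : Set (Fin n → F)))
    (hrich : ∀ ℓ ∈ L, δ * (q : ℝ) ^ k ≤ ((S.filter (fun p => p ∈ ℓ)).card : ℝ))
    (hL : (L.card : ℝ) = γ * (q : ℝ) ^ (n - k) * qBinom q n k)
    (hκ : κ = γ * (q : ℝ) ^ k)
    (hSsmall : (S.card : ℝ) < δ * (q : ℝ) ^ n)
    (hInc : (∑ ℓ ∈ L, ((S.filter (fun p => p ∈ ℓ)).card : ℝ)) ≤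
      (S.card : ℝ) * L.card / (q : ℝ) ^ (n - k) +
        Real.sqrt ((q : ℝ) ^ k * qBinom q (n - 1) k * S.card * L.card *
          (1 - (S.card : ℝ) / (q : ℝ) ^ n)))
    (hqb : (q : ℝ) ^ k * qBinom q (n - 1) k < qBinom q n k) :
    (δ * κ / (κ + 1) - Real.sqrt (δ * (1 - δ) / κ)) * (q : ℝ) ^ n ≤ S.card :=
  haemers_consequence_general q n k hq hkn δ γ κ hδ0 hδ1 hγ S L hrich hL hκ hInc hqb
end
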